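/- arXiv:2010.09220 — 9 statements merged into one kernel-verified Lean document; each statement's English description precedes it below -/
import Mathlib

section
/- For any set X, the operation □ on Bin(X) is associative: for all binary operations *, • and ∘ on X, ((X,*) □ (X,•)) □ (X,∘) = (X,*) □ ((X,•) □ (X,∘)), i.e., for all x, y in X the operation obtained by composing in either order agrees. -/
/-- The product of two binary operations on `X`:
`x □ y := (x * y) • (y * x)` where `f` plays the role of `*` and `g` of `•`. -/
def box {X : Type*} (f g : X → X → X) : X → X → X :=
  fun x y => g (f x y) (f y x)

/-- The operation `□` on `Bin(X)` is associative. -/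
theorem box_assoc {X : Type*} (f g h : X → X → X) :
    ∀ x y : X, box (box f g) h x y = box f (box g h) x y :=
  -- both sides unfold to `h (g (f x y) (f y x)) (g (f y x) (f x y))`
  fun _ _ => rfl
end

section
/- If binary operations * and • on a set X both have the orientation property (x * y ∈ {x, y} and x • y ∈ {x, y} for all x, y in X), then their product □, defined by x □ y := (x * y) • (y * x), also has the orientation property; hence the groupoids with the orientation property form a subsemigroup of (Bin(X), □). -/
/-- A binary operation has the orientation property if `x * y ∈ {x, y}` for all `x, y`. -/
def OrientationProperty {X : Type*} (f : X → X → X) : Prop :=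
  ∀ x y : X, f x y ∈ ({x, y} : Set X)

theorem OrientationProperty.apply_mem {X : Type*} {f : X → X → X} (hf : OrientationProperty f)
    {s : Set X} {a b : X} (ha : a ∈ s) (hb : b ∈ s) : f a b ∈ s := by
  rcases hf a b with h | h <;> rw [h] <;> assumption

/-- If `*` and `•` both have the orientation property, so does their product `□`. -/
theorem box_orientationProperty {X : Type*} (f g : X → X → X)
    (hf : OrientationProperty f) (hg : OrientationProperty g) :
    OrientationProperty (box f g) := fun x y =>
  hg.apply_mem (hf x y) (Set.pair_comm y x ▸ hf y x)
end

section
/- If a binary operation • on a set X belongs to ZBin(X), then for all x, y in X with x ≠ y, the set {x, y} equals the set {x • y, y • x}. -/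
/-- A binary operation `•` is in the center `ZBin(X)` if for every binary operation `*`
and all `x, y`, `(x * y) • (y * x) = (x • y) * (y • x)`. -/
def ZBin {X : Type*} (bullet : X → X → X) : Prop :=
  ∀ star : X → X → X, ∀ x y : X,
    bullet (star x y) (star y x) = star (bullet x y) (bullet y x)

/-! Test the defining identity of `ZBin` at `x, y` against an operation `*` that sends both
`(x, y)` and `(y, x)` to `x` and is constant `c` elsewhere: the left side is `x • x` whatever `c`
is, so the right side `(x • y) * (y • x)` cannot be evaluated at a pair where `*` equals `c`.
Hence `(x • y, y • x)` is `(x, y)` or `(y, x)`. -/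

theorem ZBin.mk_mem_pair {X : Type*} {bullet : X → X → X} (h : ZBin bullet) {x y : X}
    (hxy : x ≠ y) : (bullet x y, bullet y x) ∈ ({(x, y), (y, x)} : Set (X × X)) := by
  classical
  by_contra hout
  let star (c : X) (u v : X) : X := if (u, v) ∈ ({(x, y), (y, x)} : Set (X × X)) then x else c
  have hconst (c : X) : bullet x x = c := by
    have hid := h (star c) x y
    rwa [show star c x y = x from if_pos (by simp), show star c y x = x from if_pos (by simp),
      show star c (bullet x y) (bullet y x) = c from if_neg hout] at hid
  exact hxy ((hconst x).symm.trans (hconst y))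

/-- If `• ∈ ZBin(X)` then `x ≠ y` implies `{x, y} = {x • y, y • x}`. -/
theorem ZBin.pair_eq {X : Type*} (bullet : X → X → X) (h : ZBin bullet) :
    ∀ x y : X, x ≠ y → ({x, y} : Set X) = {bullet x y, bullet y x} := by
  intro x y hxy
  rcases h.mk_mem_pair hxy with hfix | hswap
  · simp only [Prod.mk.injEq] at hfix
    rw [hfix.1, hfix.2]
  · simp only [Set.mem_singleton_iff, Prod.mk.injEq] at hswap
    rw [hswap.1, hswap.2, Set.pair_comm]
end

section
/- If a binary operation • on a set X belongs to ZBin(X), then for all x, y in X with x ≠ y, the restriction of • to {x, y} is either a left-zero-semigroup (i.e., x • y = x and y • x = y) or a right-zero-semigroup (i.e., x • y = y and y • x = x). -/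
/-!
Taking `*` to ignore its first argument, `u * v = f v`, shows that every self-map `f` of `X`
is an endomorphism of `•`. A map fixing `x` and `y` but moving `x • y` then forces
`x • y ∈ {x, y}`, and the transposition of `x` and `y` forces `y • x` to be the other one.
-/

namespace ZBin

variable {X : Type*} {bullet : X → X → X}

theorem map_bullet (h : ZBin bullet) (f : X → X) (x y : X) :
    bullet (f x) (f y) = f (bullet x y) :=
  h (fun _ v => f v) y x

theorem bullet_eq_left_or_right (h : ZBin bullet) (x y : X) :
    bullet x y = x ∨ bullet x y = y := by
  classical
  by_contra! hne
  obtain ⟨hx, hy⟩ := hne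
  have := h.map_bullet (Function.update id (bullet x y) x) x y
  rw [Function.update_of_ne (Ne.symm hx), Function.update_of_ne (Ne.symm hy),
    Function.update_self] at this
  exact hx this

theorem bullet_swap [DecidableEq X] (h : ZBin bullet) (x y : X) :
    bullet y x = Equiv.swap x y (bullet x y) := by
  simpa only [Equiv.swap_apply_left, Equiv.swap_apply_right] using
    h.map_bullet (Equiv.swap x y) x y

end ZBin

/-- If `• ∈ ZBin(X)` and `x ≠ y`, then the restriction of `•` to `{x, y}` is either
a left-zero-semigroup or a right-zero-semigroup. -/
theorem ZBin.pair_leftZero_or_rightZero {X : Type*} (bullet : X → X → X)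
    (h : ZBin bullet) : ∀ x y : X, x ≠ y →
      (bullet x y = x ∧ bullet y x = y) ∨ (bullet x y = y ∧ bullet y x = x) := by
  classical
  intro x y _
  rcases h.bullet_eq_left_or_right x y with hxy | hxy
  · exact Or.inl ⟨hxy, by rw [h.bullet_swap, hxy, Equiv.swap_apply_left]⟩
  · exact Or.inr ⟨hxy, by rw [h.bullet_swap, hxy, Equiv.swap_apply_right]⟩
end

section
/- Let X be a set, let * be a commutative binary operation on X, and let • be a binary operation in ZBin(X). Then the product (X,*) □ (X,•), given by x □ y = (x * y) • (y * x), is again a commutative binary operation; in fact x □ y = x * y for all x, y in X. Hence the collection Ab(X) of commutative binary operations on X satisfies Ab(X) □ ZBin(X) ⊆ Ab(X), i.e., Ab(X) is a right ideal of ZBin(X). -/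
theorem ZBin.idem {X : Type*} {bullet : X → X → X} (hz : ZBin bullet) (a : X) :
    bullet a a = a :=
  hz (fun _ _ => a) a a

theorem box_eq_of_comm_of_idem {X : Type*} {star bullet : X → X → X}
    (hcomm : ∀ x y : X, star x y = star y x) (hidem : ∀ a : X, bullet a a = a) (x y : X) :
    box star bullet x y = star x y := by
  rw [box, hcomm y x, hidem]

/-- If `*` is commutative and `• ∈ ZBin(X)`, then `(X,*) □ (X,•)` coincides with `*`
(so it is commutative): `Ab(X)` is a right ideal of `ZBin(X)`. -/
theorem Ab_right_ideal_ZBin {X : Type*} (star bullet : X → X → X)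
    (hcomm : ∀ x y : X, star x y = star y x) (hz : ZBin bullet) :
    (∀ x y : X, box star bullet x y = star x y) ∧
    (∀ x y : X, box star bullet x y = box star bullet y x) := by
  have hbox := box_eq_of_comm_of_idem hcomm hz.idem
  exact ⟨hbox, fun x y => by rw [hbox, hbox, hcomm]⟩
end

section
/- If • and * are binary operations on a set X such that (X,•) and (X,*) are both locally-zero groupoids, then their product (X,□), where x □ y := (x • y) * (y • x), is also a locally-zero groupoid; hence the locally-zero groupoids on X form a subsemigroup of (Bin(X), □). -/
/-- A groupoid is locally-zero if it is idempotent and its restriction to every pair of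
distinct elements is either a left-zero-semigroup or a right-zero-semigroup. -/
def LocallyZero {X : Type*} (bullet : X → X → X) : Prop :=
  (∀ x : X, bullet x x = x) ∧
  ∀ x y : X, x ≠ y →
    (bullet x y = x ∧ bullet y x = y) ∨ (bullet x y = y ∧ bullet y x = x)

theorem locallyZero_iff {X : Type*} {f : X → X → X} :
    LocallyZero f ↔ ∀ x y : X, (f x y = x ∧ f y x = y) ∨ (f x y = y ∧ f y x = x) := by
  constructor
  · rintro ⟨hidem, hpair⟩ x y
    by_cases hxy : x = y
    · subst hxy
      exact Or.inl ⟨hidem x, hidem x⟩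
    · exact hpair x y hxy
  · intro h
    exact ⟨fun x => (h x x).elim And.left And.left, fun x y _ => h x y⟩

/-- The product of two locally-zero groupoids is locally-zero: the locally-zero
groupoids form a subsemigroup of `(Bin(X), □)`. -/
theorem box_locallyZero {X : Type*} (bullet star : X → X → X)
    (hb : LocallyZero bullet) (hs : LocallyZero star) :
    LocallyZero (box bullet star) := by
  rw [locallyZero_iff] at hb hs ⊢
  intro x y
  rcases hb x y with ⟨hxy, hyx⟩ | ⟨hxy, hyx⟩
  · simpa only [box, hxy, hyx] using hs x y
  · simpa only [box, hxy, hyx] using (hs y x).symm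
end

section
/- If • and * are binary operations on a set X that both belong to ZBin(X), then their product binary operation x □ y := (x • y) * (y • x) also belongs to ZBin(X). -/
/-- The product of two members of `ZBin(X)` is again in `ZBin(X)`. -/
theorem box_mem_ZBin {X : Type*} (bullet star : X → X → X)
    (hb : ZBin bullet) (hs : ZBin star) :
    ZBin (box bullet star) := by
  intro op x y
  calc box bullet star (op x y) (op y x)
      = star (bullet (op x y) (op y x)) (bullet (op y x) (op x y)) := rfl
    _ = star (op (bullet x y) (bullet y x)) (op (bullet y x) (bullet x y)) := by
        rw [hb op x y, hb op y x]
    _ = op (box bullet star x y) (box bullet star y x) := hs op _ _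
end

section
/- There exists a locally-zero groupoid that is not a semigroup: on the three-element set X = {a, b, c}, the binary operation • given by a•a=a, a•b=a, a•c=c, b•a=b, b•b=b, b•c=b, c•a=a, c•b=c, c•c=c is locally-zero but is not associative (indeed (a•b)•c = c while a•(b•c) = a). -/
/-- The groupoid on `{a, b, c}` (encoded as `Fin 3` with `a = 0`, `b = 1`, `c = 2`)
given by the table `a•a=a, a•b=a, a•c=c, b•a=b, b•b=b, b•c=b, c•a=a, c•b=c, c•c=c`. -/
def exOp : Fin 3 → Fin 3 → Fin 3 := fun x y =>
  match x, y with
  | 0, 0 => 0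
  | 0, 1 => 0
  | 0, 2 => 2
  | 1, 0 => 1
  | 1, 1 => 1
  | 1, 2 => 1
  | 2, 0 => 0
  | 2, 1 => 2
  | 2, 2 => 2

theorem locallyZero_exOp : LocallyZero exOp :=
  ⟨by decide, by decide⟩

theorem exOp_exOp_zero_one_two : exOp (exOp 0 1) 2 = 2 := rfl

theorem exOp_zero_exOp_one_two : exOp 0 (exOp 1 2) = 0 := rfl

/-- There is a locally-zero groupoid that is not a semigroup: the above table is
locally-zero but not associative, since `(a•b)•c = c` while `a•(b•c) = a`. -/
theorem exists_locallyZero_not_semigroup :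
    LocallyZero exOp ∧
    ¬ (∀ x y z : Fin 3, exOp (exOp x y) z = exOp x (exOp y z)) ∧
    exOp (exOp 0 1) 2 = 2 ∧ exOp 0 (exOp 1 2) = 0 := by
  refine ⟨locallyZero_exOp, fun assoc => ?_, exOp_exOp_zero_one_two, exOp_zero_exOp_one_two⟩
  have h012 := assoc 0 1 2
  rw [exOp_exOp_zero_one_two, exOp_zero_exOp_one_two] at h012
  exact absurd h012 (by decide)
end

section
/- Let (X,•) be a locally-zero groupoid. If • is associative (i.e., (X,•) is a semigroup), then (X,•) is either the left-zero-semigroup on X (x • y = x for all x, y) or the right-zero-semigroup on X (x • y = y for all x, y). -/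
/-!
Associativity forces every element `a` to be a left zero (`a • y = a` for all `y`) or a left
identity (`a • y = y` for all `y`): if `a • b = b` and `a • c = a` with `b ≠ c`, then whichever
way the pair `{b, c}` multiplies, one of `(b • c) • a = b • (c • a)` or
`(a • b) • c = a • (b • c)` identifies `a` with `b` or with `c`. A left zero `x` and a left
identity `a` satisfy `x • a = x = a • x`, which no two distinct elements of a locally-zero
groupoid do; so the elements are either all left zeros or all left identities.
-/

namespace LocallyZero

variable {X : Type*} {op : X → X → X}

theorem of_op_ne_left (hlz : LocallyZero op) {x y : X} (h : op x y ≠ x) :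
    op x y = y ∧ op y x = x := by
  have hxy : x ≠ y := by rintro rfl; exact h (hlz.1 x)
  exact (hlz.2 x y hxy).resolve_left fun h' => h h'.1

theorem of_op_ne_right (hlz : LocallyZero op) {x y : X} (h : op x y ≠ y) :
    op x y = x ∧ op y x = y := by
  have hxy : x ≠ y := by rintro rfl; exact h (hlz.1 x)
  exact (hlz.2 x y hxy).resolve_right fun h' => h h'.1

theorem leftZero_or_leftIdentity (hlz : LocallyZero op)
    (hassoc : ∀ x y z : X, op (op x y) z = op x (op y z)) (a : X) :
    (∀ y, op a y = a) ∨ (∀ y, op a y = y) := by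
  by_contra! ⟨⟨b, hb⟩, c, hc⟩
  obtain ⟨hab, hba⟩ := hlz.of_op_ne_left hb
  obtain ⟨hac, hca⟩ := hlz.of_op_ne_right hc
  have hbc : b ≠ c := by rintro rfl; exact hb hac
  rcases hlz.2 b c hbc with ⟨hbc', -⟩ | ⟨hbc', -⟩
  · have := hassoc b c a
    rw [hbc', hba, hca, hbc'] at this
    exact hb (by rw [hab, this])
  · have := hassoc a b c
    rw [hab, hbc', hac] at this
    exact hc (by rw [hac, this])

theorem eq_of_leftZero_of_leftIdentity (hlz : LocallyZero op) {x a : X}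
    (hx : ∀ y, op x y = x) (ha : ∀ y, op a y = y) : x = a := by
  by_contra hne
  have hax := (hlz.of_op_ne_right (x := x) (y := a) (by rwa [hx])).2
  exact hne (by rw [← hax, ha])

end LocallyZero

/-- A locally-zero groupoid which is a semigroup is the left-zero-semigroup
or the right-zero-semigroup. -/
theorem locallyZero_semigroup {X : Type*} (bullet : X → X → X)
    (hlz : LocallyZero bullet)
    (hassoc : ∀ x y z : X, bullet (bullet x y) z = bullet x (bullet y z)) :
    (∀ x y : X, bullet x y = x) ∨ (∀ x y : X, bullet x y = y) := by
  refine or_iff_not_imp_left.2 fun hleft => ?_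
  push Not at hleft
  obtain ⟨a, b, hab⟩ := hleft
  have ha : ∀ y, bullet a y = y :=
    (hlz.leftZero_or_leftIdentity hassoc a).resolve_left fun h => hab (h b)
  intro x
  refine (hlz.leftZero_or_leftIdentity hassoc x).resolve_left fun hx => ?_
  obtain rfl := hlz.eq_of_leftZero_of_leftIdentity hx ha
  exact hab (hx b)
end
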